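/- In the Cantor dyadic group FMRA setting, suppose the set E_m = {ω ∈ Δ₂ : m(σω) = m(σω+0.1) = 0} has measure zero. If m' ∈ L²(D) is any Λ-periodic function with φ̂(ρω) = m'(ω)φ̂(ω) a.e., then E_{m'} = {ω ∈ Δ₂ : m'(σω) = m'(σω+0.1) = 0} also has measure zero. -/

import Mathlib

/-!
Common setting: the Vilenkin group `Vil p` (sequences `ℤ → ZMod p` vanishing
below some index), its discrete subgroup `H`, the neighbourhood `U`,
the shift automorphism, the generalized characters, and a bundled structure
`VilenkinSetting` carrying the Haar measures on the group and on its dual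
(realized on the same underlying sequence space), the Plancherel (Fourier)
transform, translations and the dilation operator, with their standard
compatibility properties.
-/

open MeasureTheory Filter Topology
open scoped ENNReal NNReal Pointwise Classical ComplexConjugate

noncomputable section

/-- The underlying additive group of the Vilenkin group: sequences
`x : ℤ → ZMod p` with `x j = 0` for all `j` below some `k = k(x)`. -/
def vilCarrier (p : ℕ) : AddSubgroup (ℤ → ZMod p) where
  carrier := {x | ∃ k : ℤ, ∀ j < k, x j = 0}
  zero_mem' := ⟨0, fun _ _ => rfl⟩
  add_mem' := by
    rintro a b ⟨k, hk⟩ ⟨l, hl⟩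
    refine ⟨min k l, fun j hj => ?_⟩
    have h1 := hk j (lt_of_lt_of_le hj (min_le_left _ _))
    have h2 := hl j (lt_of_lt_of_le hj (min_le_right _ _))
    simp_all [Pi.add_apply]
  neg_mem' := by
    rintro a ⟨k, hk⟩
    exact ⟨k, fun j hj => by simp [hk j hj]⟩

/-- The Vilenkin group (as a type). The dual group `G̃*` is realized on the
same type of sequences. -/
abbrev Vil (p : ℕ) : Type := vilCarrier p

/-- The discrete subgroup `H = {x : x_j = 0 for j > 0}` of the Vilenkin group.
On the dual side the same subgroup realizes the annihilator `H⊥`. -/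
def Hsub (p : ℕ) : AddSubgroup (Vil p) where
  carrier := {x | ∀ j > 0, (x : ℤ → ZMod p) j = 0}
  zero_mem' := fun _ _ => rfl
  add_mem' := by
    intro a b ha hb j hj
    simp [ha j hj, hb j hj]
  neg_mem' := by
    intro a ha j hj
    simp [ha j hj]

/-- The subgroup-neighbourhoods `U_l = {x : x_j = 0 for j ≤ l}` (as sets). -/
def UsetL (p : ℕ) (l : ℤ) : Set (Vil p) := {x | ∀ j ≤ l, (x : ℤ → ZMod p) j = 0}

/-- `U = U_0`; on the dual side this realizes `U*`. -/
def Uset (p : ℕ) : Set (Vil p) := UsetL p 0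

/-- The topology of the Vilenkin group, generated by cosets of the `U_l`. -/
instance (p : ℕ) : TopologicalSpace (Vil p) :=
  TopologicalSpace.generateFrom {s | ∃ (x : Vil p) (l : ℤ), s = (x + ·) '' UsetL p l}

/-- The Borel σ-algebra on the Vilenkin group. -/
instance (p : ℕ) : MeasurableSpace (Vil p) := borel (Vil p)

/-- The shift automorphism `A` (resp. `B` on the dual side): `(Ax)_j = x_{j+1}`. -/
def shiftMap (p : ℕ) : Vil p ≃+ Vil p where
  toFun x := ⟨fun j => (x : ℤ → ZMod p) (j + 1), by
    obtain ⟨k, hk⟩ := x.2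
    exact ⟨k - 1, fun j hj => hk _ (by omega)⟩⟩
  invFun x := ⟨fun j => (x : ℤ → ZMod p) (j - 1), by
    obtain ⟨k, hk⟩ := x.2
    exact ⟨k + 1, fun j hj => hk _ (by omega)⟩⟩
  left_inv x :=
    Subtype.ext (funext fun j =>
      congrArg (x : ℤ → ZMod p) (show j - 1 + 1 = j by omega))
  right_inv x :=
    Subtype.ext (funext fun j =>
      congrArg (x : ℤ → ZMod p) (show j + 1 - 1 = j by omega))
  map_add' x y := by
    apply Subtype.ext
    funext j
    rfl

/-- The element `0.ζ` of the (dual) Vilenkin group: coordinate `ζ` in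
position `1` and `0` elsewhere. -/
def dotEl (p : ℕ) (ζ : ZMod p) : Vil p :=
  ⟨fun j => if j = 1 then ζ else 0, ⟨1, fun j hj => if_neg (by omega)⟩⟩

/-- The generalized Walsh character pairing
`χ(x, ω) = exp((2πi/p) Σ_j x_j ω_{1-j})`. -/
def vilChar (p : ℕ) (x ω : Vil p) : ℂ :=
  Complex.exp (2 * Real.pi * Complex.I *
    (((∑ᶠ j : ℤ, (x : ℤ → ZMod p) j * (ω : ℤ → ZMod p) (1 - j)).val : ℂ) / (p : ℂ)))

/-- A bundled Vilenkin-group setting: Haar measures `μ` (on `G̃`) and `ν`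
(on the dual `G̃*`, realized on the same sequence space), normalized so that
`U` (resp. `U*`) has measure one, the Plancherel/Fourier transform `F`,
the translation operators `T`, the dilation operator `Dil`, and their
standard compatibility properties. -/
structure VilenkinSetting (p : ℕ) where
  /-- Haar measure on the Vilenkin group `G̃`. -/
  μ : Measure (Vil p)
  /-- Haar measure on the dual group `G̃*`. -/
  ν : Measure (Vil p)
  μ_inv : ∀ g : Vil p, MeasurePreserving (fun x => x + g) μ μ
  ν_inv : ∀ g : Vil p, MeasurePreserving (fun x => x + g) ν ν
  μ_U : μ (Uset p) = 1
  ν_U : ν (Uset p) = 1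
  /-- The Fourier (Plancherel) transform `f ↦ f̂`, a unitary from `L²(G̃)`
  onto `L²(G̃*)`. -/
  F : Lp ℂ 2 μ ≃ₗᵢ[ℂ] Lp ℂ 2 ν
  /-- The translation operators `T_g f = f(· ⊖ g)`. -/
  T : Vil p → (Lp ℂ 2 μ ≃ₗᵢ[ℂ] Lp ℂ 2 μ)
  T_apply : ∀ (g : Vil p) (f : Lp ℂ 2 μ),
    (T g f : Vil p → ℂ) =ᵐ[μ] fun x => f (x - g)
  F_T : ∀ h ∈ Hsub p, ∀ f : Lp ℂ 2 μ,
    (F (T h f) : Vil p → ℂ) =ᵐ[ν] fun ω => vilChar p h ω * F f ω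
  /-- The dilation operator `(𝔻f)(x) = p^{1/2} f(Ax)`. -/
  Dil : Lp ℂ 2 μ ≃ₗᵢ[ℂ] Lp ℂ 2 μ
  Dil_apply : ∀ f : Lp ℂ 2 μ,
    (Dil f : Vil p → ℂ) =ᵐ[μ] fun x => (Real.sqrt p : ℂ) * f (shiftMap p x)
  F_Dil : ∀ f : Lp ℂ 2 μ,
    (F (Dil f) : Vil p → ℂ) =ᵐ[ν] fun ω =>
      ((Real.sqrt p)⁻¹ : ℂ) * F f ((shiftMap p).symm ω)

namespace VilenkinSetting

variable {p : ℕ} (S : VilenkinSetting p)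

/-- The principal shift-invariant space `⟨φ⟩`, the closed linear span of the
translates `T_h φ`, `h ∈ H`. -/
def pSIS (φ : Lp ℂ 2 S.μ) : Submodule ℂ (Lp ℂ 2 S.μ) :=
  (Submodule.span ℂ (Set.range fun h : Hsub p => S.T h φ)).topologicalClosure

/-- Periodization of a function on the dual group:
`Σ_{h ∈ H⊥} |g(ω ⊕ h)|²` (valued in `ℝ≥0∞`). -/
def perF (g : Vil p → ℂ) (ω : Vil p) : ℝ≥0∞ :=
  ∑' h : Hsub p, (‖g (ω + (h : Vil p))‖₊ : ℝ≥0∞) ^ 2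

/-- The periodization function `P_φ(ω) = Σ_{h ∈ H⊥} |φ̂(ω ⊕ h)|²`. -/
def Pper (φ : Lp ℂ 2 S.μ) (ω : Vil p) : ℝ≥0∞ :=
  perF (S.F φ) ω

/-- `E_φ = supp P_φ`. -/
def Eset (φ : Lp ℂ 2 S.μ) : Set (Vil p) := {ω | S.Pper φ ω ≠ 0}

/-- `V_φ = {ω ∈ U* : φ̂_{‖ω} ≠ 0}`. -/
def Vset (φ : Lp ℂ 2 S.μ) : Set (Vil p) :=
  {ω ∈ Uset p | ∃ h ∈ Hsub p, S.F φ (ω + h) ≠ 0}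

/-- The spectrum `η(𝕊) = {ω ∈ U* : 𝕊̂_{‖ω} ≠ {0}}` of a subspace
`𝕊 ⊆ L²(G̃)`. -/
def spec (V : Submodule ℂ (Lp ℂ 2 S.μ)) : Set (Vil p) :=
  {ω ∈ Uset p | ∃ f ∈ V, ∃ h ∈ Hsub p, S.F f (ω + h) ≠ 0}

/-- The quantity `Σ_{h∈H} |⟨f, T_h φ⟩|²` appearing in the frame conditions. -/
def frameSum (φ f : Lp ℂ 2 S.μ) : ℝ :=
  ∑' h : Hsub p, ‖(inner ℂ f (S.T h φ) : ℂ)‖ ^ 2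

/-- `(T_h φ)_{h∈H}` is a Bessel sequence with some bound `b > 0`. -/
def IsBessel (φ : Lp ℂ 2 S.μ) : Prop :=
  ∃ b : ℝ, 0 < b ∧ ∀ f : Lp ℂ 2 S.μ, S.frameSum φ f ≤ b * ‖f‖ ^ 2

/-- `(T_h φ)_{h∈H}` is a frame for the closed subspace `W` with bounds
`a ≤ b`: the translates span `W` and the frame inequalities hold on `W`. -/
def IsFrameFor (φ : Lp ℂ 2 S.μ) (W : Submodule ℂ (Lp ℂ 2 S.μ)) (a b : ℝ) : Prop :=
  S.pSIS φ = W ∧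
    ∀ f ∈ W, a * ‖f‖ ^ 2 ≤ S.frameSum φ f ∧ S.frameSum φ f ≤ b * ‖f‖ ^ 2

/-- `(T_h φ)_{h∈H}` is a Parseval frame for the closed subspace `W`. -/
def IsParsevalFrameFor (φ : Lp ℂ 2 S.μ) (W : Submodule ℂ (Lp ℂ 2 S.μ)) : Prop :=
  S.pSIS φ = W ∧ ∀ f ∈ W, S.frameSum φ f = ‖f‖ ^ 2

/-- The common part of the definitions of MRA and FMRA: a nested sequence of
closed subspaces, compatible with the dilation, with dense union and trivial
intersection. -/
def IsLadder (V : ℤ → Submodule ℂ (Lp ℂ 2 S.μ)) : Prop :=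
  (∀ j, IsClosed (V j : Set (Lp ℂ 2 S.μ))) ∧
  (∀ j, V j ≤ V (j + 1)) ∧
  (∀ j, ∀ f : Lp ℂ 2 S.μ, f ∈ V j ↔ S.Dil f ∈ V (j + 1)) ∧
  Dense (⋃ j : ℤ, (V j : Set (Lp ℂ 2 S.μ))) ∧
  (∀ f : Lp ℂ 2 S.μ, (∀ j : ℤ, f ∈ V j) → f = 0)

/-- `(V_j)` is an MRA with scaling function `φ`: the translates of `φ` form
an orthonormal basis of `V₀`. -/
def IsMRA (V : ℤ → Submodule ℂ (Lp ℂ 2 S.μ)) (φ : Lp ℂ 2 S.μ) : Prop :=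
  S.IsLadder V ∧ φ ∈ V 0 ∧ S.pSIS φ = V 0 ∧
    Orthonormal ℂ (fun h : Hsub p => S.T h φ)

/-- `(V_j)` is an FMRA with scaling function `φ` and frame bounds `a ≤ b`. -/
def IsFMRAWith (V : ℤ → Submodule ℂ (Lp ℂ 2 S.μ)) (φ : Lp ℂ 2 S.μ) (a b : ℝ) : Prop :=
  S.IsLadder V ∧ φ ∈ V 0 ∧ 0 < a ∧ a ≤ b ∧ S.IsFrameFor φ (V 0) a b

/-- `(V_j)` is an FMRA with scaling function `φ`. -/
def IsFMRA (V : ℤ → Submodule ℂ (Lp ℂ 2 S.μ)) (φ : Lp ℂ 2 S.μ) : Prop :=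
  ∃ a b : ℝ, S.IsFMRAWith V φ a b

/-- `(V_j)` is a Parseval FMRA with scaling function `φ`. -/
def IsParsevalFMRA (V : ℤ → Submodule ℂ (Lp ℂ 2 S.μ)) (φ : Lp ℂ 2 S.μ) : Prop :=
  S.IsLadder V ∧ φ ∈ V 0 ∧ S.IsParsevalFrameFor φ (V 0)

/-- `m` is an `H⊥`-periodic function belonging to `L²(U*)` (extended
`H⊥`-periodically to the whole dual group). -/
def IsFilter (m : Vil p → ℂ) : Prop :=
  (∀ ω : Vil p, ∀ h ∈ Hsub p, m (ω + h) = m ω) ∧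
    MemLp m 2 (S.ν.restrict (Uset p))

/-- The bracket `[g₁, g₂](ω) = Σ_{h∈H⊥} g₁(ω ⊕ h) conj (g₂(ω ⊕ h))`. -/
def brkt (g₁ g₂ : Vil p → ℂ) (ω : Vil p) : ℂ :=
  ∑' h : Hsub p, g₁ (ω + (h : Vil p)) * conj (g₂ (ω + (h : Vil p)))

end VilenkinSetting

/-! ### Additional notions used in the Cantor-dyadic-group (p = 2) setting -/

/-- `Λ₁ = {n ∈ Λ : σ n ∈ Λ}`. -/
def Lam1 (p : ℕ) : Set (Vil p) :=
  {n | n ∈ Hsub p ∧ (shiftMap p).symm n ∈ Hsub p}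

/-- `Λ ∖ Λ₁`. -/
def LamO (p : ℕ) : Set (Vil p) := (Hsub p : Set (Vil p)) \ Lam1 p

namespace VilenkinSetting

variable {p : ℕ} (S : VilenkinSetting p)

/-- `Σ_{n ∈ s} |φ̂(σ(ω + n))|²` for a subset `s` of the lattice. -/
def sumShift (φ : Lp ℂ 2 S.μ) (s : Set (Vil p)) (ω : Vil p) : ℝ≥0∞ :=
  ∑' n : s, (‖S.F φ ((shiftMap p).symm (ω + (n : Vil p)))‖₊ : ℝ≥0∞) ^ 2

/-- `Δ₂ = {ω ∈ D : Σ_{n∈Λ₁}|φ̂(σ(ω+n))|² ≠ 0 and Σ_{n∈Λ∖Λ₁}|φ̂(σ(ω+n))|² ≠ 0}`. -/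
def Delta2 (φ : Lp ℂ 2 S.μ) : Set (Vil p) :=
  {ω ∈ Uset p | S.sumShift φ (Lam1 p) ω ≠ 0 ∧ S.sumShift φ (LamO p) ω ≠ 0}

/-- `Δ₁`: exactly one of the two partial periodizations is nonzero. -/
def Delta1 (φ : Lp ℂ 2 S.μ) : Set (Vil p) :=
  {ω ∈ Uset p |
    (S.sumShift φ (Lam1 p) ω ≠ 0 ∧ S.sumShift φ (LamO p) ω = 0) ∨
    (S.sumShift φ (Lam1 p) ω = 0 ∧ S.sumShift φ (LamO p) ω ≠ 0)}

/-- The blocked set `E = {ω ∈ Δ₂ : m(σω) = m(σω + 0.1) = 0}`. -/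
def blockedSet (φ : Lp ℂ 2 S.μ) (m : Vil p → ℂ) : Set (Vil p) :=
  {ω ∈ S.Delta2 φ |
    m ((shiftMap p).symm ω) = 0 ∧ m ((shiftMap p).symm ω + dotEl p 1) = 0}

/-- The spectrum `η(V₀) = {ω ∈ D : Σ_{n∈Λ}|φ̂(ω+n)|² ≠ 0}` of `V₀ = ⟨φ⟩`. -/
def etaV0 (φ : Lp ℂ 2 S.μ) : Set (Vil p) := {ω ∈ Uset p | S.Pper φ ω ≠ 0}

/-- `W₀`, the orthogonal complement of `V₀` in `V₁`. -/
def Wcompl (V : ℤ → Submodule ℂ (Lp ℂ 2 S.μ)) : Submodule ℂ (Lp ℂ 2 S.μ) :=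
  V 1 ⊓ (V 0)ᗮ

/-- Integer powers `𝔻^j` of the dilation operator. -/
def dilZ (j : ℤ) (f : Lp ℂ 2 S.μ) : Lp ℂ 2 S.μ :=
  if 0 ≤ j then (fun g => S.Dil g)^[j.toNat] f
  else (fun g => S.Dil.symm g)^[(-j).toNat] f

end VilenkinSetting

namespace VilenkinSetting

/-- The filter `m_ψ` of the candidate frame wavelet on the Cantor dyadic
group (`p = 2`):
`m_ψ(ω) = (−1)^{ω₀} conj(m(σω + 0.1)) Σ_{n'∈Λ∖Λ₁}|φ̂(σ(ω+n'))|²` on `Δ₂ + Λ`,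
`1` on `(Δ₁ ∩ η(V₀)ᶜ) + Λ` and `0` otherwise. -/
def mpsi (S : VilenkinSetting 2) (φ : Lp ℂ 2 S.μ) (m : Vil 2 → ℂ) (ω : Vil 2) : ℂ :=
  if ω ∈ S.Delta2 φ + (Hsub 2 : Set (Vil 2)) then
    (-1 : ℂ) ^ ((ω : ℤ → ZMod 2) 0).val *
      conj (m ((shiftMap 2).symm ω + dotEl 2 1)) *
      ((S.sumShift φ (LamO 2) ω).toReal : ℂ)
  else if ω ∈ (S.Delta1 φ ∩ (S.etaV0 φ)ᶜ) + (Hsub 2 : Set (Vil 2)) then 1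
  else 0

/-- `ψ̂ = m_ψ · (φ̂ ∘ σ)`, the Fourier transform of the candidate frame
wavelet. -/
def psiHat (S : VilenkinSetting 2) (φ : Lp ℂ 2 S.μ) (m : Vil 2 → ℂ) (ω : Vil 2) : ℂ :=
  S.mpsi φ m ω * S.F φ ((shiftMap 2).symm ω)

end VilenkinSetting

/-!
Where `φ̂(σ(ω + n)) ≠ 0`, the refinement equations for `m` and `m'` at `σ(ω + n)` force
`m = m'` there. By `Λ`-periodicity this common value is `m(σω)` when `n ∈ Λ₁` and `m(σω + 0.1)`
when `n ∈ Λ ∖ Λ₁`, since then `σn + 0.1 ∈ Λ`; and a point of `Δ₂` has an `n` of each kind with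
`φ̂(σ(ω + n)) ≠ 0`.
Hence `E_{m'} ⊆ E_m` up to the points `ω` at which a refinement equation fails at some
`σ(ω + n)`. These form a null set: `Λ` is countable, and `σ` is quasi-measure-preserving because
the image of the Haar measure under `σ` is again translation invariant and s-finite, hence
absolutely continuous with respect to the Haar measure.
-/

open Set TopologicalSpace

instance (p : ℕ) : Countable (ZMod p) := by
  cases p
  exacts [inferInstanceAs (Countable ℤ), inferInstance]

namespace Vil

variable {p : ℕ}

def subgroupU (p : ℕ) (l : ℤ) : AddSubgroup (Vil p) where
  carrier := UsetL p l
  zero_mem' _ _ := rfl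
  add_mem' {a b} ha hb j hj := by
    change (a : ℤ → ZMod p) j + (b : ℤ → ZMod p) j = 0
    rw [ha j hj, hb j hj, add_zero]
  neg_mem' {a} ha j hj := by
    change -(a : ℤ → ZMod p) j = 0
    rw [ha j hj, neg_zero]

lemma mem_subgroupU {x : Vil p} {l : ℤ} :
    x ∈ subgroupU p l ↔ ∀ j ≤ l, (x : ℤ → ZMod p) j = 0 :=
  Iff.rfl

lemma isOpen_vadd_subgroupU (x : Vil p) (l : ℤ) :
    IsOpen (x +ᵥ (subgroupU p l : Set (Vil p))) :=
  GenerateOpen.basic _ ⟨x, l, rfl⟩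

lemma continuous_of_isOpen_preimage_vadd_subgroupU {X : Type*} [TopologicalSpace X]
    {f : X → Vil p}
    (hf : ∀ (x : Vil p) (l : ℤ), IsOpen (f ⁻¹' (x +ᵥ (subgroupU p l : Set (Vil p))))) :
    Continuous f :=
  continuous_generateFrom_iff.2 <| by
    rintro _ ⟨x, l, rfl⟩
    exact hf x l

instance : ContinuousAdd (Vil p) where
  continuous_add := continuous_of_isOpen_preimage_vadd_subgroupU fun x l => by
    refine isOpen_iff_forall_mem_open.2 fun ab hab => ?_
    refine ⟨(ab.1 +ᵥ (subgroupU p l : Set (Vil p))) ×ˢ (ab.2 +ᵥ (subgroupU p l : Set (Vil p))),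
      ?_, (isOpen_vadd_subgroupU _ _).prod (isOpen_vadd_subgroupU _ _),
      mem_own_leftAddCoset _ _, mem_own_leftAddCoset _ _⟩
    rintro ⟨a, b⟩ ⟨ha, hb⟩
    simp only [mem_preimage, mem_leftAddCoset_iff, SetLike.mem_coe] at hab ha hb ⊢
    convert add_mem (add_mem hab ha) hb using 1
    abel

instance : ContinuousNeg (Vil p) where
  continuous_neg := continuous_of_isOpen_preimage_vadd_subgroupU fun x l => by
    convert isOpen_vadd_subgroupU (-x) l using 1
    ext y
    simp only [mem_preimage, mem_leftAddCoset_iff, SetLike.mem_coe]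
    rw [← neg_mem_iff]
    congr! 1
    abel

lemma shiftMap_symm_mem_subgroupU {x : Vil p} {l : ℤ} :
    (shiftMap p).symm x ∈ subgroupU p l ↔ x ∈ subgroupU p (l - 1) := by
  simp only [mem_subgroupU]
  refine ⟨fun h j hj => ?_, fun h j hj => h (j - 1) (by omega)⟩
  have := h (j + 1) (by omega)
  change (x : ℤ → ZMod p) (j + 1 - 1) = 0 at this
  rwa [add_sub_cancel_right] at this

lemma continuous_shiftMap_symm : Continuous (shiftMap p).symm :=
  continuous_of_isOpen_preimage_vadd_subgroupU fun x l => by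
    convert isOpen_vadd_subgroupU (shiftMap p x) (l - 1) using 1
    ext y
    simp only [mem_preimage, mem_leftAddCoset_iff, SetLike.mem_coe]
    rw [← shiftMap_symm_mem_subgroupU, map_add, map_neg, AddEquiv.symm_apply_apply]

lemma countable_setOf_forall_gt_eq_zero (l : ℤ) :
    {x : Vil p | ∀ j > l, (x : ℤ → ZMod p) j = 0}.Countable := by
  have hbox : ∀ k : ℤ, {x : Vil p | ∀ j, (j < k ∨ l < j) → (x : ℤ → ZMod p) j = 0}.Countable := by
    intro k
    refine countable_coe_iff.1 <| Function.Injective.countable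
      (f := fun x j => ((x : Vil p) : ℤ → ZMod p) (j : Finset.Icc k l)) fun a b hab => ?_
    ext j
    by_cases hj : k ≤ j ∧ j ≤ l
    · exact congrFun hab ⟨j, Finset.mem_Icc.2 hj⟩
    · rw [a.2 j (by omega), b.2 j (by omega)]
  refine (countable_iUnion hbox).mono fun x hx => ?_
  obtain ⟨k, hk⟩ := x.2
  exact mem_iUnion.2 ⟨k, fun j hj => hj.elim (hk j) (hx j)⟩

instance : Countable (Hsub p) :=
  (countable_setOf_forall_gt_eq_zero 0).to_subtype

def truncate (l : ℤ) (x : Vil p) : Vil p :=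
  ⟨fun j => if j ≤ l then (x : ℤ → ZMod p) j else 0, by
    obtain ⟨k, hk⟩ := x.2
    exact ⟨k, fun j hj => by simp [hk j hj]⟩⟩

lemma truncate_apply_of_lt {l j : ℤ} (x : Vil p) (hj : l < j) :
    (truncate l x : ℤ → ZMod p) j = 0 :=
  if_neg (by omega)

lemma vadd_subgroupU_truncate (l : ℤ) (x : Vil p) :
    truncate l x +ᵥ (subgroupU p l : Set (Vil p)) = x +ᵥ (subgroupU p l : Set (Vil p)) := by
  refine (leftAddCoset_eq_iff _).2 fun j hj => ?_
  change -(if j ≤ l then (x : ℤ → ZMod p) j else 0) + (x : ℤ → ZMod p) j = 0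
  rw [if_pos hj, neg_add_cancel]

instance : SecondCountableTopology (Vil p) := by
  refine SecondCountableTopology.mk' <|
    (countable_iUnion fun l => (countable_setOf_forall_gt_eq_zero l).image
      fun x : Vil p => x +ᵥ (subgroupU p l : Set (Vil p))).mono ?_
  rintro _ ⟨x, l, rfl⟩
  exact mem_iUnion.2 ⟨l, truncate l x, fun j hj => truncate_apply_of_lt x hj,
    vadd_subgroupU_truncate l x⟩

instance : BorelSpace (Vil p) := ⟨rfl⟩

lemma apply_shiftMap_symm_add_of_mem_Lam1 {β : Type*} {m : Vil p → β}
    (hm : ∀ ω, ∀ h ∈ Hsub p, m (ω + h) = m ω)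
    {n : Vil p} (hn : n ∈ Lam1 p) (ω : Vil p) :
    m ((shiftMap p).symm (ω + n)) = m ((shiftMap p).symm ω) := by
  rw [map_add]
  exact hm _ _ hn.2

lemma add_self_eq_zero (x : Vil 2) : x + x = 0 :=
  Subtype.ext <| funext fun j => CharTwo.add_self_eq_zero ((x : ℤ → ZMod 2) j)

lemma shiftMap_symm_add_dotEl_mem_Hsub {n : Vil 2} (hn : n ∈ LamO 2) :
    (shiftMap 2).symm n + dotEl 2 1 ∈ Hsub 2 := by
  obtain ⟨hnH, hnσ⟩ := hn
  have hn0 : (n : ℤ → ZMod 2) 0 ≠ 0 := fun h0 =>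
    hnσ ⟨hnH, fun j hj => by
      obtain rfl | hj := eq_or_lt_of_le (show (1 : ℤ) ≤ j by omega)
      exacts [h0, hnH (j - 1) (by omega)]⟩
  intro j hj
  change (n : ℤ → ZMod 2) (j - 1) + (if j = 1 then 1 else 0) = 0
  obtain rfl | hj := eq_or_lt_of_le (show (1 : ℤ) ≤ j by omega)
  · rw [sub_self, if_pos rfl]
    exact (show ∀ a : ZMod 2, a ≠ 0 → a + 1 = 0 by decide) _ hn0
  · rw [if_neg hj.ne', add_zero]
    exact hnH (j - 1) (by omega)

lemma apply_shiftMap_symm_add_of_mem_LamO {β : Type*} {m : Vil 2 → β}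
    (hm : ∀ ω, ∀ h ∈ Hsub 2, m (ω + h) = m ω) {n : Vil 2} (hn : n ∈ LamO 2) (ω : Vil 2) :
    m ((shiftMap 2).symm (ω + n)) = m ((shiftMap 2).symm ω + dotEl 2 1) := by
  rw [map_add, ← hm ((shiftMap 2).symm ω + dotEl 2 1) _ (shiftMap_symm_add_dotEl_mem_Hsub hn),
    add_add_add_comm, add_self_eq_zero, add_zero]

end Vil

namespace VilenkinSetting

open Vil

section

variable {p : ℕ} (S : VilenkinSetting p)

instance : S.ν.IsAddLeftInvariant :=
  ⟨fun g => by simpa only [add_comm] using (S.ν_inv g).map_eq⟩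

instance : SigmaFinite S.ν := by
  refine Measure.sigmaFinite_of_countable
    (countable_range fun h : Hsub p => (h : Vil p) +ᵥ (subgroupU p 0 : Set (Vil p))) ?_ ?_
  · rintro _ ⟨h, rfl⟩
    rw [measure_vadd]
    exact S.ν_U.trans_lt ENNReal.one_lt_top
  · refine eq_univ_of_forall fun x => mem_sUnion.2 ⟨_, ⟨⟨truncate 0 x, ?_⟩, rfl⟩, ?_⟩
    · intro j hj
      exact truncate_apply_of_lt x hj
    · change x ∈ truncate 0 x +ᵥ (subgroupU p 0 : Set (Vil p))
      rw [vadd_subgroupU_truncate]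
      exact mem_own_leftAddCoset _ _

lemma quasiMeasurePreserving_shiftMap_symm :
    Measure.QuasiMeasurePreserving (shiftMap p).symm S.ν S.ν := by
  have hmeas : Measurable (shiftMap p).symm := continuous_shiftMap_symm.measurable
  have : (S.ν.map (shiftMap p).symm).IsAddLeftInvariant :=
    isAddLeftInvariant_map (shiftMap p).symm.toAddMonoidHom.toAddHom hmeas
      (shiftMap p).symm.surjective
  refine ⟨hmeas, absolutelyContinuous_of_isAddLeftInvariant _ _ fun h => ?_⟩
  simpa [h] using S.ν_U

lemma ae_refinement_at_shiftMap_symm_add {g m : Vil p → ℂ}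
    (href : ∀ᵐ ω ∂S.ν, g (shiftMap p ω) = m ω * g ω) :
    ∀ᵐ ω ∂S.ν, ∀ n ∈ Hsub p,
      g (ω + n) = m ((shiftMap p).symm (ω + n)) * g ((shiftMap p).symm (ω + n)) := by
  have hall : ∀ n : Hsub p, ∀ᵐ ω ∂S.ν,
      g (ω + n) = m ((shiftMap p).symm (ω + n)) * g ((shiftMap p).symm (ω + n)) := fun n => by
    have hqmp := S.quasiMeasurePreserving_shiftMap_symm.comp (S.ν_inv n).quasiMeasurePreserving
    simpa using hqmp.ae href
  exact (ae_all_iff.2 hall).mono fun ω h n hn => h ⟨n, hn⟩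

lemma exists_ne_zero_of_sumShift_ne_zero {φ : Lp ℂ 2 S.μ} {s : Set (Vil p)} {ω : Vil p}
    (h : S.sumShift φ s ω ≠ 0) : ∃ n ∈ s, S.F φ ((shiftMap p).symm (ω + n)) ≠ 0 := by
  contrapose! h
  exact ENNReal.tsum_eq_zero.2 fun n => by rw [h n n.2]; simp

end

variable (S : VilenkinSetting 2) {φ : Lp ℂ 2 S.μ} {m m' : Vil 2 → ℂ}

lemma mem_blockedSet_of_refinement
    (hm : ∀ ω, ∀ h ∈ Hsub 2, m (ω + h) = m ω) (hm' : ∀ ω, ∀ h ∈ Hsub 2, m' (ω + h) = m' ω)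
    {ω : Vil 2}
    (href : ∀ n ∈ Hsub 2, S.F φ (ω + n) =
      m ((shiftMap 2).symm (ω + n)) * S.F φ ((shiftMap 2).symm (ω + n)))
    (href' : ∀ n ∈ Hsub 2, S.F φ (ω + n) =
      m' ((shiftMap 2).symm (ω + n)) * S.F φ ((shiftMap 2).symm (ω + n)))
    (hω : ω ∈ S.blockedSet φ m') : ω ∈ S.blockedSet φ m := by
  obtain ⟨hΔ, hσ, hσ'⟩ := hω
  have agree : ∀ n ∈ Hsub 2, S.F φ ((shiftMap 2).symm (ω + n)) ≠ 0 →
      m ((shiftMap 2).symm (ω + n)) = m' ((shiftMap 2).symm (ω + n)) :=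
    fun n hn hne => mul_right_cancel₀ hne ((href n hn).symm.trans (href' n hn))
  obtain ⟨n₁, hn₁, hne₁⟩ := S.exists_ne_zero_of_sumShift_ne_zero hΔ.2.1
  obtain ⟨n₂, hn₂, hne₂⟩ := S.exists_ne_zero_of_sumShift_ne_zero hΔ.2.2
  refine ⟨hΔ, ?_, ?_⟩
  · rw [← apply_shiftMap_symm_add_of_mem_Lam1 hm hn₁, agree n₁ hn₁.1 hne₁,
      apply_shiftMap_symm_add_of_mem_Lam1 hm' hn₁, hσ]
  · rw [← apply_shiftMap_symm_add_of_mem_LamO hm hn₂, agree n₂ hn₂.1 hne₂,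
      apply_shiftMap_symm_add_of_mem_LamO hm' hn₂, hσ']

end VilenkinSetting

theorem blocked_set_null_independent_of_filter_general
    (S : VilenkinSetting 2)
    (φ : Lp ℂ 2 S.μ)
    (m : Vil 2 → ℂ) (hm : S.IsFilter m)
    (href : ∀ᵐ ω ∂S.ν, S.F φ (shiftMap 2 ω) = m ω * S.F φ ω)
    (hE : S.ν (S.blockedSet φ m) = 0)
    (m' : Vil 2 → ℂ) (hm' : S.IsFilter m')
    (href' : ∀ᵐ ω ∂S.ν, S.F φ (shiftMap 2 ω) = m' ω * S.F φ ω) :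
    S.ν (S.blockedSet φ m') = 0 := by
  refine measure_mono_null_ae ?_ hE
  filter_upwards [S.ae_refinement_at_shiftMap_symm_add href,
    S.ae_refinement_at_shiftMap_symm_add href'] with ω hω hω'
  exact S.mem_blockedSet_of_refinement hm.1 hm'.1 hω hω'

/-- (Cantor dyadic group, `p = 2`.) If
`E_m = {ω ∈ Δ₂ : m(σω) = m(σω+0.1) = 0}` is null and `m'` is another
`Λ`-periodic filter in `L²(D)` with `φ̂(ρω) = m'(ω)φ̂(ω)` a.e., then
`E_{m'}` is null as well. -/
theorem blocked_set_null_independent_of_filter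
    (S : VilenkinSetting 2) (V : ℤ → Submodule ℂ (Lp ℂ 2 S.μ))
    (φ : Lp ℂ 2 S.μ) (hV : S.IsFMRA V φ)
    (m : Vil 2 → ℂ) (hm : S.IsFilter m)
    (href : ∀ᵐ ω ∂S.ν, S.F φ (shiftMap 2 ω) = m ω * S.F φ ω)
    (hE : S.ν (S.blockedSet φ m) = 0)
    (m' : Vil 2 → ℂ) (hm' : S.IsFilter m')
    (href' : ∀ᵐ ω ∂S.ν, S.F φ (shiftMap 2 ω) = m' ω * S.F φ ω) :
    S.ν (S.blockedSet φ m') = 0 :=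
  blocked_set_null_independent_of_filter_general S φ m hm href hE m' hm' href'
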